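/- Let 0 = t_0 < t_1 < ⋯ < t_N be a partition of [0,T] with step sizes τ_k = t_k − t_{k−1}, let 0 < α < 1, and let a^{(n)}_{n−k} be the nonuniform L1 weights and P^{(n)}_{n−k} the complementary discrete convolution kernels. Then for q ∈ {0,1} and every 1 ≤ n ≤ N, Σ_{k=1}^{n} P^{(n)}_{n−k} β_{1+qα−α}(t_k) ≤ β_{1+qα}(t_n), where β_ν(t) = t^{ν−1}/Γ(ν). -/

import Mathlib

/-!
The complementary kernels are nonnegative (by the mean value theorem `a^{(j)}_{j-k}` is a value
of the decreasing function `β_{1-α}` between `t_j - t_k` and `t_j - t_{k-1}`, so the weights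
increase with `k`) and dual to the weights: `∑_{j=k}^{n} P^{(n)}_{n-j} a^{(j)}_{j-k} = 1`.
Hence, for any sequence `v`, the L1 formula `∑_{k ≤ j} a^{(j)}_{j-k} (v_k - v_{k-1})` summed
against the kernels telescopes to `v_n - v_0`, and it suffices to bound the left-hand side
termwise by it. For `q = 0` this is `β_{1-α}(t_j) ≤ a^{(j)}_{j-1}`. For `q = 1` take
`v_k = β_{1+α}(t_k)`: the Beta integral gives `1 = ∫_0^{t_j} β_{1-α}(t_j - s) β_α(s) ds`, and on
each `[t_{k-1}, t_k]` Chebyshev's integral inequality for the increasing `β_{1-α}(t_j - ·)` and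
the decreasing `β_α` bounds the piece by `a^{(j)}_{j-k} (v_k - v_{k-1})`.
-/

noncomputable def betaK (ν t : ℝ) : ℝ := t ^ (ν - 1) / Real.Gamma ν

open MeasureTheory

section BetaKernel

open Set

variable {μ ν x : ℝ}

lemma betaK_one (x : ℝ) : betaK 1 x = 1 := by simp [betaK]

lemma betaK_nonneg (hν : 0 < ν) (hx : 0 ≤ x) : 0 ≤ betaK ν x :=
  div_nonneg (Real.rpow_nonneg hx _) (Real.Gamma_pos_of_pos hν).le

lemma betaK_pos (hν : 0 < ν) (hx : 0 < x) : 0 < betaK ν x :=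
  div_pos (Real.rpow_pos_of_pos hx _) (Real.Gamma_pos_of_pos hν)

lemma betaK_antitoneOn (hν0 : 0 < ν) (hν1 : ν ≤ 1) : AntitoneOn (betaK ν) (Ioi 0) :=
  fun _ hx _ _ hxy => div_le_div_of_nonneg_right
    (Real.rpow_le_rpow_of_nonpos hx hxy (by linarith)) (Real.Gamma_pos_of_pos hν0).le

lemma continuousOn_betaK : ContinuousOn (betaK ν) (Ioi 0) := fun x hx =>
  ((Real.continuousAt_rpow_const x _ (Or.inl (ne_of_gt hx))).div_const _).continuousWithinAt

lemma continuous_betaK_add_one (hν : 0 < ν) : Continuous (betaK (ν + 1)) :=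
  (Real.continuous_rpow_const (by simp only [add_sub_cancel_right]; exact hν.le)).div_const _

lemma hasDerivAt_betaK_add_one (hν : ν ≠ 0) (hx : 0 < x) :
    HasDerivAt (betaK (ν + 1)) (betaK ν x) x := by
  have h := (Real.hasDerivAt_rpow_const (p := ν) (Or.inl hx.ne')).div_const (Real.Gamma (ν + 1))
  have hβ : betaK (ν + 1) = fun y => y ^ ν / Real.Gamma (ν + 1) := by
    funext y; simp only [betaK, add_sub_cancel_right]
  rw [hβ, betaK, ← mul_div_mul_left _ _ hν, ← Real.Gamma_add_one hν]
  exact h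

lemma exists_betaK_eq_slope (hν : 0 < ν) {A B : ℝ} (hA : 0 ≤ A) (hAB : A < B) :
    ∃ ξ ∈ Ioo A B, betaK ν ξ = (betaK (ν + 1) B - betaK (ν + 1) A) / (B - A) :=
  exists_hasDerivAt_eq_slope _ _ hAB (continuous_betaK_add_one hν).continuousOn
    fun _ hx => hasDerivAt_betaK_add_one hν.ne' (hA.trans_lt hx.1)

lemma intervalIntegrable_betaK (hν : 0 < ν) (a b : ℝ) :
    IntervalIntegrable (betaK ν) volume a b :=
  (intervalIntegral.intervalIntegrable_rpow' (by linarith)).div_const _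

lemma intervalIntegrable_betaK_sub (hν : 0 < ν) (c a b : ℝ) :
    IntervalIntegrable (fun x => betaK ν (c - x)) volume a b := by
  simpa only [sub_sub_cancel] using (intervalIntegrable_betaK hν (c - a) (c - b)).comp_sub_left c

lemma integral_betaK (hν : 0 < ν) (a b : ℝ) :
    ∫ x in a..b, betaK ν x = betaK (ν + 1) b - betaK (ν + 1) a := by
  simp only [betaK, intervalIntegral.integral_div,
    integral_rpow (Or.inl (by linarith : -1 < ν - 1)), Real.Gamma_add_one hν.ne',
    add_sub_cancel_right, sub_add_cancel]
  field_simp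

lemma integral_betaK_sub (hν : 0 < ν) (c a b : ℝ) :
    ∫ x in a..b, betaK ν (c - x) = betaK (ν + 1) (c - a) - betaK (ν + 1) (c - b) := by
  rw [intervalIntegral.integral_comp_sub_left (betaK ν), integral_betaK hν]

lemma integral_rpow_mul_sub_rpow (hμ : 0 < μ) (hν : 0 < ν) {T : ℝ} (hT : 0 < T) :
    ∫ s in 0..T, s ^ (ν - 1) * (T - s) ^ (μ - 1) =
      T ^ (ν + μ - 1) * (Real.Gamma ν * Real.Gamma μ / Real.Gamma (ν + μ)) := by
  have h := Complex.betaIntegral_scaled ν μ hT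
  rw [Complex.betaIntegral_eq_Gamma_mul_div _ _ (by simpa) (by simpa)] at h
  have hcongr :
      EqOn (fun s : ℝ => (s : ℂ) ^ ((ν : ℂ) - 1) * ((T : ℂ) - s) ^ ((μ : ℂ) - 1))
      (fun s => ((s ^ (ν - 1) * (T - s) ^ (μ - 1) : ℝ) : ℂ)) (uIcc 0 T) := by
    intro s hs
    rw [uIcc_of_le hT.le] at hs
    push_cast
    rw [Complex.ofReal_cpow hs.1, Complex.ofReal_cpow (sub_nonneg.2 hs.2)]
    push_cast
    ring
  rw [intervalIntegral.integral_congr hcongr, intervalIntegral.integral_ofReal,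
    show (ν : ℂ) + μ - 1 = ((ν + μ - 1 : ℝ) : ℂ) by push_cast; ring,
    ← Complex.ofReal_cpow hT.le, ← Complex.ofReal_add, Complex.Gamma_ofReal, Complex.Gamma_ofReal,
    Complex.Gamma_ofReal] at h
  exact_mod_cast h

lemma integral_betaK_sub_mul_betaK (hμ : 0 < μ) (hν : 0 < ν) {T : ℝ} (hT : 0 < T) :
    ∫ s in 0..T, betaK μ (T - s) * betaK ν s = betaK (μ + ν) T := by
  have hΓμ := Real.Gamma_pos_of_pos hμ
  have hΓν := Real.Gamma_pos_of_pos hν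
  simp only [betaK, div_mul_div_comm]
  rw [intervalIntegral.integral_div]
  simp only [mul_comm ((T - _) ^ (μ - 1))]
  rw [integral_rpow_mul_sub_rpow hμ hν hT, add_comm ν μ]
  field_simp

end BetaKernel

section Chebyshev

open Set

variable {f g : ℝ → ℝ} {a b : ℝ}

lemma hasDerivAt_integral_of_continuousOn_Ioo (hfi : IntervalIntegrable f volume a b)
    (hfc : ContinuousOn f (Ioo a b)) {x : ℝ} (hx : x ∈ Ioo a b) :
    HasDerivAt (fun u => ∫ s in a..u, f s) (f x) x :=
  intervalIntegral.integral_hasDerivAt_right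
    (hfi.mono_set (uIcc_subset_uIcc left_mem_uIcc (mem_uIcc_of_le hx.1.le hx.2.le)))
    (hfc.stronglyMeasurableAtFilter isOpen_Ioo x hx) (hfc.continuousAt (isOpen_Ioo.mem_nhds hx))

lemma integral_sub_mul_sub_nonneg (hf : MonotoneOn f (Ioo a b)) (hg : AntitoneOn g (Ioo a b))
    {x : ℝ} (hx : x ∈ Ioo a b) : 0 ≤ ∫ s in a..x, (f x - f s) * (g s - g x) := by
  rw [intervalIntegral.integral_of_le hx.1.le]
  refine setIntegral_nonneg measurableSet_Ioc fun s hs => ?_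
  have hs' : s ∈ Ioo a b := ⟨hs.1, hs.2.trans_lt hx.2⟩
  exact mul_nonneg (sub_nonneg.2 (hf hs' hx hs.2)) (sub_nonneg.2 (hg hs' hx hs.2))

lemma integral_sub_mul_sub_eq (hfi : IntervalIntegrable f volume a b)
    (hgi : IntervalIntegrable g volume a b)
    (hfgi : IntervalIntegrable (fun x => f x * g x) volume a b) :
    ∫ s in a..b, (f b - f s) * (g s - g b) =
      f b * (∫ s in a..b, g s) + (∫ s in a..b, f s) * g b -
        ((∫ s in a..b, f s * g s) + (b - a) * (f b * g b)) := by
  have hfg : IntervalIntegrable (fun s => f b * g s + g b * f s) volume a b :=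
    (hgi.const_mul _).add (hfi.const_mul _)
  have hexpand : (fun s => (f b - f s) * (g s - g b)) =
      fun s => (f b * g s + g b * f s - f s * g s) - f b * g b := by
    funext s; ring
  rw [hexpand, intervalIntegral.integral_sub (hfg.sub hfgi) intervalIntegrable_const,
    intervalIntegral.integral_sub hfg hfgi,
    intervalIntegral.integral_add (hgi.const_mul _) (hfi.const_mul _),
    intervalIntegral.integral_const_mul, intervalIntegral.integral_const_mul,
    intervalIntegral.integral_const, smul_eq_mul]
  ring

/-- Chebyshev's integral inequality. -/
theorem mul_integral_mul_le_integral_mul_integral (hab : a ≤ b)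
    (hf : MonotoneOn f (Ioo a b)) (hg : AntitoneOn g (Ioo a b))
    (hfc : ContinuousOn f (Ioo a b)) (hgc : ContinuousOn g (Ioo a b))
    (hfi : IntervalIntegrable f volume a b) (hgi : IntervalIntegrable g volume a b)
    (hfgi : IntervalIntegrable (fun x => f x * g x) volume a b) :
    (b - a) * ∫ x in a..b, f x * g x ≤ (∫ x in a..b, f x) * ∫ x in a..b, g x := by
  -- `φ a = 0`, and `φ' x = ∫ s in a..x, (f x - f s) * (g s - g x) ≥ 0`
  set φ : ℝ → ℝ := fun x =>
    (∫ s in a..x, f s) * (∫ s in a..x, g s) - (x - a) * ∫ s in a..x, f s * g s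
  have hcont : ∀ {h : ℝ → ℝ}, IntervalIntegrable h volume a b →
      ContinuousOn (fun x => ∫ s in a..x, h s) (Icc a b) := fun hh => by
    simpa only [uIcc_of_le hab] using
      intervalIntegral.continuousOn_primitive_interval' hh left_mem_uIcc
  have hφ : MonotoneOn φ (Icc a b) := by
    refine monotoneOn_of_hasDerivWithinAt_nonneg (convex_Icc a b)
      (((hcont hfi).mul (hcont hgi)).sub
        ((continuousOn_id.sub continuousOn_const).mul (hcont hfgi)))
      (f' := fun x => ∫ s in a..x, (f x - f s) * (g s - g x)) (fun x hx => ?_)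
      (fun x hx => integral_sub_mul_sub_nonneg hf hg (by rwa [interior_Icc] at hx))
    rw [interior_Icc] at hx ⊢
    have hF := hasDerivAt_integral_of_continuousOn_Ioo hfi hfc hx
    have hG := hasDerivAt_integral_of_continuousOn_Ioo hgi hgc hx
    have hFG := hasDerivAt_integral_of_continuousOn_Ioo hfgi (hfc.mul hgc) hx
    have hsub : uIcc a x ⊆ uIcc a b :=
      uIcc_subset_uIcc left_mem_uIcc (mem_uIcc_of_le hx.1.le hx.2.le)
    rw [integral_sub_mul_sub_eq (hfi.mono_set hsub) (hgi.mono_set hsub) (hfgi.mono_set hsub),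
      ← one_mul (∫ s in a..x, f s * g s)]
    exact ((hF.mul hG).sub (((hasDerivAt_id x).sub_const a).mul hFG)).hasDerivWithinAt
  simpa [φ] using hφ (left_mem_Icc.2 hab) (right_mem_Icc.2 hab) hab

end Chebyshev

section DiscreteKernel

open Finset

variable {n : ℕ} {a P : ℕ → ℕ → ℝ}

lemma sum_Icc_one_eq_sum_range {M : Type*} [AddCommMonoid M] (f : ℕ → M) (n : ℕ) :
    ∑ k ∈ Icc 1 n, f k = ∑ k ∈ range n, f (k + 1) := by
  rw [range_eq_Ico, sum_Ico_add', ← Finset.Ico_add_one_right_eq_Icc]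

lemma sum_Icc_one_sub_pred (v : ℕ → ℝ) (n : ℕ) :
    ∑ k ∈ Icc 1 n, (v k - v (k - 1)) = v n - v 0 := by
  rw [sum_Icc_one_eq_sum_range]
  exact sum_range_sub v n

lemma complementaryKernel_nonneg (ha0 : ∀ k, 1 ≤ k → k ≤ n → 0 < a k 0)
    (ha : ∀ j k, 1 ≤ k → k < j → j ≤ n → a j (j - k) ≤ a j (j - k - 1))
    (hP0 : P n 0 = 1 / a n 0)
    (hPrec : ∀ k, 1 ≤ k → k + 1 ≤ n →
      P n (n - k) =
        1 / a k 0 * ∑ j ∈ Icc (k + 1) n, (a j (j - k - 1) - a j (j - k)) * P n (n - j))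
    {k : ℕ} (hk : 1 ≤ k) (hkn : k ≤ n) : 0 ≤ P n (n - k) := by
  obtain ⟨d, hd⟩ : ∃ d, n - k = d := ⟨_, rfl⟩
  induction d using Nat.strong_induction_on generalizing k with
  | _ d ih =>
    rcases hkn.eq_or_lt with rfl | hlt
    · rw [Nat.sub_self, hP0]; exact (one_div_pos.2 (ha0 k hk le_rfl)).le
    rw [hPrec k hk hlt]
    refine mul_nonneg (one_div_pos.2 (ha0 k hk hlt.le)).le (sum_nonneg fun j hj => ?_)
    rw [mem_Icc] at hj
    exact mul_nonneg (sub_nonneg.2 (ha j k hk hj.1 hj.2))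
      (ih (n - j) (by omega) (by omega) hj.2 rfl)

lemma sum_complementaryKernel_mul_eq_one (ha0 : ∀ k, 1 ≤ k → k ≤ n → a k 0 ≠ 0)
    (hP0 : P n 0 = 1 / a n 0)
    (hPrec : ∀ k, 1 ≤ k → k + 1 ≤ n →
      P n (n - k) =
        1 / a k 0 * ∑ j ∈ Icc (k + 1) n, (a j (j - k - 1) - a j (j - k)) * P n (n - j))
    {k : ℕ} (hk : 1 ≤ k) (hkn : k ≤ n) :
    ∑ j ∈ Icc k n, P n (n - j) * a j (j - k) = 1 := by
  induction hkn using Nat.decreasingInduction with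
  | self => rw [Icc_self, sum_singleton, Nat.sub_self, hP0, one_div_mul_cancel (ha0 n hk le_rfl)]
  | of_succ k hlt ih =>
    rw [← insert_Icc_add_one_left_eq_Icc hlt.le, sum_insert (by simp), Nat.sub_self,
      hPrec k hk hlt, one_div_mul_eq_div, div_mul_cancel₀ _ (ha0 k hk hlt.le), ← ih (by omega),
      ← sum_add_distrib]
    refine sum_congr rfl fun j _ => ?_
    rw [Nat.sub_sub]
    ring

lemma sum_complementaryKernel_mul_sum_sub
    (horth : ∀ k, 1 ≤ k → k ≤ n → ∑ j ∈ Icc k n, P n (n - j) * a j (j - k) = 1)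
    (v : ℕ → ℝ) :
    ∑ j ∈ Icc 1 n, P n (n - j) * ∑ k ∈ Icc 1 j, a j (j - k) * (v k - v (k - 1)) =
      v n - v 0 := by
  simp_rw [mul_sum]
  rw [sum_comm' (t' := Icc 1 n) (s' := fun k => Icc k n) (fun j k => by simp only [mem_Icc]; omega)]
  rw [← sum_Icc_one_sub_pred v n]
  refine sum_congr rfl fun k hk => ?_
  rw [mem_Icc] at hk
  simp_rw [← mul_assoc, ← sum_mul, horth k hk.1 hk.2, one_mul]

lemma sum_complementaryKernel_mul_le (hP : ∀ k, 1 ≤ k → k ≤ n → 0 ≤ P n (n - k))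
    (horth : ∀ k, 1 ≤ k → k ≤ n → ∑ j ∈ Icc k n, P n (n - j) * a j (j - k) = 1)
    {v w : ℕ → ℝ}
    (hw : ∀ j, 1 ≤ j → j ≤ n → w j ≤ ∑ k ∈ Icc 1 j, a j (j - k) * (v k - v (k - 1))) :
    ∑ j ∈ Icc 1 n, P n (n - j) * w j ≤ v n - v 0 := by
  rw [← sum_complementaryKernel_mul_sum_sub horth v]
  refine sum_le_sum fun j hj => ?_
  rw [mem_Icc] at hj
  exact mul_le_mul_of_nonneg_left (hw j hj.1 hj.2) (hP j hj.1 hj.2)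

end DiscreteKernel

section L1Weight

open Set

variable {α : ℝ} {t : ℕ → ℝ} {n k : ℕ}

/-- `l1Weight α t n k` is the L1 weight `a^{(n)}_{n-k}`. -/
noncomputable def l1Weight (α : ℝ) (t : ℕ → ℝ) (n k : ℕ) : ℝ :=
  (betaK (2 - α) (t n - t (k - 1)) - betaK (2 - α) (t n - t k)) / (t k - t (k - 1))

lemma exists_l1Weight_eq_betaK (hα : α < 1) (hk : t (k - 1) < t k) (hkn : t k ≤ t n) :
    ∃ ξ ∈ Ioo (t n - t k) (t n - t (k - 1)), l1Weight α t n k = betaK (1 - α) ξ := by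
  obtain ⟨ξ, hξ, hslope⟩ := exists_betaK_eq_slope (sub_pos.2 hα) (sub_nonneg.2 hkn)
    (by linarith : t n - t k < t n - t (k - 1))
  refine ⟨ξ, hξ, ?_⟩
  rw [hslope, l1Weight, show 1 - α + 1 = 2 - α by ring,
    show t n - t (k - 1) - (t n - t k) = t k - t (k - 1) by ring]

lemma l1Weight_pos (hα : α < 1) (ht : StrictMonoOn t (Iic n)) (hk : 1 ≤ k) (hkn : k ≤ n) :
    0 < l1Weight α t n k := by
  have htk : t k ≤ t n := ht.monotoneOn hkn self_mem_Iic hkn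
  obtain ⟨ξ, hξ, hw⟩ :=
    exists_l1Weight_eq_betaK hα (ht (show k - 1 ≤ n by omega) hkn (by omega)) htk
  exact hw ▸ betaK_pos (sub_pos.2 hα) ((sub_nonneg.2 htk).trans_lt hξ.1)

lemma l1Weight_le_l1Weight_succ (hα0 : 0 ≤ α) (hα1 : α < 1) (ht : StrictMonoOn t (Iic n))
    (hk : 1 ≤ k) (hkn : k < n) : l1Weight α t n k ≤ l1Weight α t n (k + 1) := by
  have htk : t k < t (k + 1) := ht (show k ≤ n by omega) (show k + 1 ≤ n by omega) (by omega)
  have htn : t (k + 1) ≤ t n := ht.monotoneOn (show k + 1 ≤ n by omega) self_mem_Iic (by omega)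
  obtain ⟨ξ, hξ, hw⟩ := exists_l1Weight_eq_betaK hα1
    (ht (show k - 1 ≤ n by omega) (show k ≤ n by omega) (by omega)) (htk.le.trans htn)
  obtain ⟨ξ', hξ', hw'⟩ := exists_l1Weight_eq_betaK (k := k + 1) hα1 htk htn
  rw [Nat.add_sub_cancel] at hξ'
  have hξ'0 : 0 < ξ' := (sub_nonneg.2 htn).trans_lt hξ'.1
  rw [hw, hw']
  exact betaK_antitoneOn (sub_pos.2 hα1) (by linarith) hξ'0 (hξ'0.trans (hξ'.2.trans hξ.1))
    (hξ'.2.trans hξ.1).le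

lemma betaK_le_l1Weight_one (hα0 : 0 ≤ α) (hα1 : α < 1) (ht0 : t 0 = 0)
    (ht : StrictMonoOn t (Iic n)) (hn : 1 ≤ n) : betaK (1 - α) (t n) ≤ l1Weight α t n 1 := by
  have htn : t 1 ≤ t n := ht.monotoneOn (show 1 ≤ n from hn) self_mem_Iic hn
  obtain ⟨ξ, hξ, hw⟩ :=
    exists_l1Weight_eq_betaK hα1 (ht (show 0 ≤ n by omega) hn one_pos) htn
  rw [Nat.sub_self, ht0, sub_zero] at hξ
  have hξ0 : 0 < ξ := (sub_nonneg.2 htn).trans_lt hξ.1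
  exact hw ▸ betaK_antitoneOn (sub_pos.2 hα1) (by linarith) hξ0 (hξ0.trans hξ.2) hξ.2.le

lemma integral_betaK_mul_le_l1Weight_mul (hα0 : 0 < α) (hα1 : α < 1) (h0 : 0 ≤ t (k - 1))
    (hk : t (k - 1) < t k) (hkn : t k ≤ t n)
    (hint : IntervalIntegrable (fun s => betaK (1 - α) (t n - s) * betaK α s) volume
      (t (k - 1)) (t k)) :
    ∫ s in t (k - 1)..t k, betaK (1 - α) (t n - s) * betaK α s ≤
      l1Weight α t n k * (betaK (1 + α) (t k) - betaK (1 + α) (t (k - 1))) := by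
  have hcheb := mul_integral_mul_le_integral_mul_integral hk.le
    (f := fun s => betaK (1 - α) (t n - s)) (g := betaK α)
    (fun x hx y hy hxy => betaK_antitoneOn (sub_pos.2 hα1) (by linarith)
      (sub_pos.2 (hy.2.trans_le hkn)) (sub_pos.2 (hx.2.trans_le hkn)) (by linarith))
    ((betaK_antitoneOn hα0 hα1.le).mono fun x hx => h0.trans_lt hx.1)
    (continuousOn_betaK.comp (continuous_const.sub continuous_id).continuousOn
      fun x hx => sub_pos.2 (hx.2.trans_le hkn))
    (continuousOn_betaK.mono fun x hx => h0.trans_lt hx.1)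
    (intervalIntegrable_betaK_sub (sub_pos.2 hα1) _ _ _)
    (intervalIntegrable_betaK hα0 _ _) hint
  rw [integral_betaK_sub (sub_pos.2 hα1), integral_betaK hα0,
    show 1 - α + 1 = 2 - α by ring, add_comm α 1] at hcheb
  rw [l1Weight, div_mul_eq_mul_div, le_div_iff₀ (sub_pos.2 hk), mul_comm]
  exact hcheb

lemma one_le_sum_l1Weight_mul (hα0 : 0 < α) (hα1 : α < 1) (ht0 : t 0 = 0)
    (ht : StrictMonoOn t (Iic n)) (hn : 1 ≤ n) :
    1 ≤ ∑ k ∈ Finset.Icc 1 n,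
      l1Weight α t n k * (betaK (1 + α) (t k) - betaK (1 + α) (t (k - 1))) := by
  set F : ℝ → ℝ := fun s => betaK (1 - α) (t n - s) * betaK α s
  have hnonneg {k : ℕ} (hk : k ≤ n) : 0 ≤ t k :=
    ht0 ▸ ht.monotoneOn (show 0 ≤ n by omega) hk (Nat.zero_le k)
  have hmem {k : ℕ} (hk : k ≤ n) : t k ∈ uIcc 0 (t n) :=
    mem_uIcc_of_le (hnonneg hk) (ht.monotoneOn hk self_mem_Iic hk)
  have hF : ∫ s in 0..t n, F s = 1 := by
    rw [integral_betaK_sub_mul_betaK (sub_pos.2 hα1) hα0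
      (ht0 ▸ ht (show 0 ≤ n by omega) self_mem_Iic hn), sub_add_cancel, betaK_one]
  -- integrability of `F` on `[0, t n]` comes for free: its integral is not the junk value `0`
  have hint (k : ℕ) (hk : k < n) : IntervalIntegrable F volume (t k) (t (k + 1)) :=
    (intervalIntegral.intervalIntegrable_of_integral_ne_zero (hF ▸ one_ne_zero)).mono_set
      (uIcc_subset_uIcc (hmem hk.le) (hmem hk))
  calc (1 : ℝ) = ∑ k ∈ Finset.range n, ∫ s in t k..t (k + 1), F s := by
        rw [intervalIntegral.sum_integral_adjacent_intervals hint, ht0, hF]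
    _ = ∑ k ∈ Finset.Icc 1 n, ∫ s in t (k - 1)..t k, F s := by
        rw [sum_Icc_one_eq_sum_range]; simp only [Nat.add_sub_cancel]
    _ ≤ _ := Finset.sum_le_sum fun k hk => by
        rw [Finset.mem_Icc] at hk
        exact integral_betaK_mul_le_l1Weight_mul hα0 hα1 (hnonneg (by omega))
          (ht (show k - 1 ≤ n by omega) hk.2 (by omega)) (ht.monotoneOn hk.2 self_mem_Iic hk.2)
          (by simpa [Nat.sub_add_cancel hk.1] using hint (k - 1) (by omega))

end L1Weight

theorem stmt_4_general (N : ℕ) (t : ℕ → ℝ) (α : ℝ)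
    (hα0 : 0 < α) (hα1 : α < 1)
    (ht0 : t 0 = 0)
    (hmono : ∀ i j : ℕ, i < j → j ≤ N → t i < t j)
    (a : ℕ → ℕ → ℝ)
    (ha : ∀ n k : ℕ, 1 ≤ k → k ≤ n → n ≤ N →
      a n (n - k) =
        (betaK (2 - α) (t n - t (k - 1)) - betaK (2 - α) (t n - t k)) / (t k - t (k - 1)))
    (P : ℕ → ℕ → ℝ)
    (hP0 : ∀ n : ℕ, 1 ≤ n → n ≤ N → P n 0 = 1 / a n 0)
    (hPrec : ∀ n k : ℕ, 1 ≤ k → k + 1 ≤ n → n ≤ N →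
      P n (n - k) = (1 / a k 0) *
        ∑ j ∈ Finset.Icc (k + 1) n, (a j (j - k - 1) - a j (j - k)) * P n (n - j)) :
    ∀ q : ℝ, (q = 0 ∨ q = 1) → ∀ n : ℕ, 1 ≤ n → n ≤ N →
      ∑ k ∈ Finset.Icc 1 n, P n (n - k) * betaK (1 + q * α - α) (t k) ≤
        betaK (1 + q * α) (t n) := by
  intro q hq n hn hnN
  have ht : StrictMonoOn t (Set.Iic n) := fun i _ j hj hij => hmono i j hij (le_trans hj hnN)
  have hw (j k : ℕ) (hk : 1 ≤ k) (hkj : k ≤ j) (hjn : j ≤ n) :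
      a j (j - k) = l1Weight α t j k :=
    ha j k hk hkj (hjn.trans hnN)
  have ha0 (k : ℕ) (hk : 1 ≤ k) (hkn : k ≤ n) : 0 < a k 0 := by
    rw [← Nat.sub_self k, hw k k hk le_rfl hkn]
    exact l1Weight_pos hα1 (ht.mono (Set.Iic_subset_Iic.2 hkn)) hk le_rfl
  have hPrec' (k : ℕ) (hk : 1 ≤ k) (hkn : k + 1 ≤ n) := hPrec n k hk hkn hnN
  have hP (k : ℕ) (hk : 1 ≤ k) (hkn : k ≤ n) : 0 ≤ P n (n - k) :=
    complementaryKernel_nonneg ha0 (fun j k hk hkj hjn => by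
      rw [Nat.sub_sub, hw j k hk hkj.le hjn, hw j (k + 1) (by omega) hkj hjn]
      exact l1Weight_le_l1Weight_succ hα0.le hα1 (ht.mono (Set.Iic_subset_Iic.2 hjn)) hk hkj)
      (hP0 n hn hnN) hPrec' hk hkn
  have horth (k : ℕ) (hk : 1 ≤ k) (hkn : k ≤ n) :=
    sum_complementaryKernel_mul_eq_one (fun k hk hkn => (ha0 k hk hkn).ne') (hP0 n hn hnN)
      hPrec' hk hkn
  rcases hq with rfl | rfl
  · rw [zero_mul, add_zero, betaK_one]
    refine (Finset.sum_le_sum fun k hk => ?_).trans_eq (horth 1 le_rfl hn)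
    rw [Finset.mem_Icc] at hk
    rw [hw k 1 le_rfl hk.1 hk.2]
    exact mul_le_mul_of_nonneg_left (betaK_le_l1Weight_one hα0.le hα1 ht0
      (ht.mono (Set.Iic_subset_Iic.2 hk.2)) hk.1) (hP k hk.1 hk.2)
  · simp only [one_mul, add_sub_cancel_right, betaK_one]
    refine (sum_complementaryKernel_mul_le (v := fun k => betaK (1 + α) (t k)) hP horth
      fun j hj hjn => ?_).trans ?_
    · rw [Finset.sum_congr rfl fun k hk => by
        rw [hw j k (Finset.mem_Icc.1 hk).1 (Finset.mem_Icc.1 hk).2 hjn]]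
      exact one_le_sum_l1Weight_mul hα0 hα1 ht0 (ht.mono (Set.Iic_subset_Iic.2 hjn)) hj
    · rw [ht0]
      linarith [betaK_nonneg (by linarith : (0 : ℝ) < 1 + α) le_rfl]

theorem stmt_4 (T : ℝ) (N : ℕ) (hN : 1 ≤ N) (t : ℕ → ℝ) (α : ℝ)
    (hα0 : 0 < α) (hα1 : α < 1)
    (ht0 : t 0 = 0) (htN : t N = T)
    (hmono : ∀ i j : ℕ, i < j → j ≤ N → t i < t j)
    (a : ℕ → ℕ → ℝ)
    (ha : ∀ n k : ℕ, 1 ≤ k → k ≤ n → n ≤ N →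
      a n (n - k) =
        (betaK (2 - α) (t n - t (k - 1)) - betaK (2 - α) (t n - t k)) / (t k - t (k - 1)))
    (P : ℕ → ℕ → ℝ)
    (hP0 : ∀ n : ℕ, 1 ≤ n → n ≤ N → P n 0 = 1 / a n 0)
    (hPrec : ∀ n k : ℕ, 1 ≤ k → k + 1 ≤ n → n ≤ N →
      P n (n - k) = (1 / a k 0) *
        ∑ j ∈ Finset.Icc (k + 1) n, (a j (j - k - 1) - a j (j - k)) * P n (n - j)) :
    ∀ q : ℝ, (q = 0 ∨ q = 1) → ∀ n : ℕ, 1 ≤ n → n ≤ N →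
      ∑ k ∈ Finset.Icc 1 n, P n (n - k) * betaK (1 + q * α - α) (t k) ≤
        betaK (1 + q * α) (t n) :=
  stmt_4_general N t α hα0 hα1 ht0 hmono a ha P hP0 hPrec
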